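/- arXiv:1306.3837 — 6 statements merged into one kernel-verified Lean document; each statement's English description precedes it below -/
import Mathlib

section
/- Let a discrete group Γ act by homeomorphisms on a compact metric space Z, and let Ω ⊆ Z be an open Γ-invariant subset. Then the action of Γ on Ω is properly discontinuous (i.e., for every compact K ⊆ Ω the set {γ ∈ Γ : K ∩ γK ≠ ∅} is finite) if and only if no two points of Ω are dynamically related, where ξ is dynamically related to ξ′ if there exist ξ_n → ξ in Z and γ_n → ∞ in Γ with γ_n·ξ_n → ξ′. -/
open Filter Topology Pointwise

/-! If `K` is a neighbourhood of both `ξ` and `ξ'`, a sequence witnessing that `ξ'` is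
dynamically related to `ξ` eventually uses elements `γₙ` with `K ∩ γₙ • K ≠ ∅`, infinitely
many of them since `γₙ → ∞`; compact neighbourhoods inside `Ω` exist as `Z` is locally compact.
Conversely, if infinitely many distinct `γₙ` satisfy `γₙ • xₙ ∈ K` with `xₙ ∈ K`, compactness
of `K` yields a subsequence along which `xₙ → ξ` and `γₙ • xₙ → ξ'`. -/

theorem Filter.tendsto_cofinite_iff_forall_finset {α β : Type*} {f : α → β} {l : Filter α} :
    Tendsto f l cofinite ↔ ∀ F : Finset β, ∀ᶠ x in l, f x ∉ F := by
  refine ⟨fun h F => h.eventually F.eventually_cofinite_notMem, fun h => ?_⟩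
  refine hasBasis_cofinite.tendsto_right_iff.2 fun s hs => ?_
  simpa using h hs.toFinset

theorem Function.Injective.tendsto_atTop_cofinite {β : Type*} {f : ℕ → β}
    (hf : Function.Injective f) : Tendsto f atTop cofinite :=
  Nat.cofinite_eq_atTop ▸ hf.tendsto_cofinite

def DynamicallyRelated (Γ : Type*) {Z : Type*} [SMul Γ Z] [TopologicalSpace Z] (ξ ξ' : Z) :
    Prop :=
  ∃ (ξn : ℕ → Z) (γn : ℕ → Γ), Tendsto ξn atTop (𝓝 ξ) ∧ Tendsto γn atTop cofinite ∧
    Tendsto (fun n => γn n • ξn n) atTop (𝓝 ξ')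

section

variable {Γ Z : Type*} [SMul Γ Z] [TopologicalSpace Z]

theorem not_dynamicallyRelated_of_finite {K : Set Z}
    (hK : {γ : Γ | (K ∩ γ • K).Nonempty}.Finite) {ξ ξ' : Z} (hξ : K ∈ 𝓝 ξ) (hξ' : K ∈ 𝓝 ξ') :
    ¬ DynamicallyRelated Γ ξ ξ' := by
  rintro ⟨ξn, γn, hξn, hγn, hγξn⟩
  obtain ⟨n, hξnK, hγξnK, hγnK⟩ :=
    ((hξn.eventually_mem hξ).and ((hγξn.eventually_mem hξ').and
      (hγn.eventually hK.eventually_cofinite_notMem))).exists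
  exact hγnK ⟨_, hγξnK, Set.smul_mem_smul_set hξnK⟩

theorem exists_dynamicallyRelated_of_infinite [FirstCountableTopology Z] {K : Set Z}
    (hK : IsCompact K) (hinf : {γ : Γ | (K ∩ γ • K).Nonempty}.Infinite) :
    ∃ ξ ∈ K, ∃ ξ' ∈ K, DynamicallyRelated Γ ξ ξ' := by
  set γ : ℕ → Γ := fun n => hinf.natEmbedding _ n
  have hγ : Function.Injective γ := Subtype.val_injective.comp (hinf.natEmbedding _).injective
  have hret : ∀ n, ∃ x ∈ K, γ n • x ∈ K := fun n => by
    obtain ⟨_, hyK, x, hxK, rfl⟩ := (hinf.natEmbedding _ n).2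
    exact ⟨x, hxK, hyK⟩
  choose x hxK hγxK using hret
  obtain ⟨ξ, hξK, φ, hφ, hxφ⟩ := hK.tendsto_subseq hxK
  obtain ⟨ξ', hξ'K, ψ, hψ, hγxφψ⟩ := hK.tendsto_subseq fun n => hγxK (φ n)
  refine ⟨ξ, hξK, ξ', hξ'K, x ∘ φ ∘ ψ, γ ∘ φ ∘ ψ, hxφ.comp hψ.tendsto_atTop, ?_, hγxφψ⟩
  exact (hγ.comp (hφ.injective.comp hψ.injective)).tendsto_atTop_cofinite

end

theorem stmt_4_general {Γ Z : Type*} [Group Γ] [MetricSpace Z] [CompactSpace Z] [MulAction Γ Z]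
    (Ω : Set Z) (hΩ : IsOpen Ω) :
    (∀ K ⊆ Ω, IsCompact K → {γ : Γ | (K ∩ γ • K).Nonempty}.Finite) ↔
      ∀ ξ ∈ Ω, ∀ ξ' ∈ Ω, ¬ ∃ (ξn : ℕ → Z) (γn : ℕ → Γ),
        Tendsto ξn atTop (𝓝 ξ) ∧
        (∀ F : Finset Γ, ∀ᶠ n in atTop, γn n ∉ F) ∧
        Tendsto (fun n => γn n • ξn n) atTop (𝓝 ξ') := by
  simp_rw [← tendsto_cofinite_iff_forall_finset]
  constructor
  · intro hpd ξ hξ ξ' hξ'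
    obtain ⟨L, hL, hξL, hLΩ⟩ := exists_compact_subset hΩ hξ
    obtain ⟨L', hL', hξ'L', hL'Ω⟩ := exists_compact_subset hΩ hξ'
    exact not_dynamicallyRelated_of_finite (hpd _ (Set.union_subset hLΩ hL'Ω) (hL.union hL'))
      (mem_of_superset (mem_interior_iff_mem_nhds.1 hξL) Set.subset_union_left)
      (mem_of_superset (mem_interior_iff_mem_nhds.1 hξ'L') Set.subset_union_right)
  · intro hnd K hKΩ hK
    by_contra hinf
    obtain ⟨ξ, hξ, ξ', hξ', hrel⟩ := exists_dynamicallyRelated_of_infinite hK hinf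
    exact hnd ξ (hKΩ hξ) ξ' (hKΩ hξ') hrel

/-- The action on an open invariant subset `Ω` is properly discontinuous iff
no two points of `Ω` are dynamically related. -/
theorem stmt_4 {Γ Z : Type*} [Group Γ] [MetricSpace Z] [CompactSpace Z] [MulAction Γ Z]
    (hcont : ∀ γ : Γ, Continuous fun z : Z => γ • z)
    (Ω : Set Z) (hΩ : IsOpen Ω) (hinv : ∀ (γ : Γ), ∀ z ∈ Ω, γ • z ∈ Ω) :
    (∀ K ⊆ Ω, IsCompact K → {γ : Γ | (K ∩ γ • K).Nonempty}.Finite) ↔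
      ∀ ξ ∈ Ω, ∀ ξ' ∈ Ω, ¬ ∃ (ξn : ℕ → Z) (γn : ℕ → Γ),
        Tendsto ξn atTop (𝓝 ξ) ∧
        (∀ F : Finset Γ, ∀ᶠ n in atTop, γn n ∉ F) ∧
        Tendsto (fun n => γn n • ξn n) atTop (𝓝 ξ') :=
  stmt_4_general Ω hΩ
end

section
/- Let a group Γ act by homeomorphisms on a compact metric space Z, let E ⊆ Z be a compact Γ-invariant subset, and suppose the action is expanding at E: for every z ∈ E there exist γ ∈ Γ, a neighborhood U of z, and a constant c > 1 with d(γz₁, γz₂) ≥ c·d(z₁,z₂) for all z₁, z₂ ∈ U. Then the action of Γ on Z − E is cocompact: there exists a compact subset C ⊆ Z − E meeting every Γ-orbit in Z − E. -/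
open Filter Topology Metric

/-- If the action is expanding at a compact invariant set `E`, then the action
on the complement `Z − E` is cocompact. -/
theorem stmt_6 {Γ Z : Type*} [Group Γ] [MetricSpace Z] [CompactSpace Z] [MulAction Γ Z]
    (hcont : ∀ γ : Γ, Continuous fun z : Z => γ • z)
    (E : Set Z) (hE : IsCompact E) (hinv : ∀ (γ : Γ), ∀ z ∈ E, γ • z ∈ E)
    (hexp : ∀ z ∈ E, ∃ (γ : Γ) (U : Set Z) (c : ℝ), 1 < c ∧ U ∈ 𝓝 z ∧
      ∀ z₁ ∈ U, ∀ z₂ ∈ U, c * dist z₁ z₂ ≤ dist (γ • z₁) (γ • z₂)) :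
    ∃ C : Set Z, C ⊆ Eᶜ ∧ IsCompact C ∧ ∀ z ∈ Eᶜ, ∃ γ : Γ, γ • z ∈ C := by
  rcases E.eq_empty_or_nonempty with hEe | hEne
  · refine ⟨Set.univ, by simp [hEe], isCompact_univ, fun z _ => ⟨1, trivial⟩⟩
  -- choose expansion data
  choose! γ U c hc hU hexpa using hexp
  have hball : ∀ z ∈ E, ∃ r > 0, ball z r ⊆ U z := fun z hz =>
    Metric.mem_nhds_iff.mp (hU z hz)
  choose! r hrpos hrU using hball
  -- finite subcover
  obtain ⟨t, htE, htfin, hcov⟩ :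
      ∃ t ⊆ E, t.Finite ∧ E ⊆ ⋃ i ∈ t, ball i (r i / 4) :=
    hE.elim_finite_subcover_image (fun i hi => isOpen_ball)
      (fun z hz => Set.mem_biUnion hz (mem_ball_self (by linarith [hrpos z hz])))
  set T : Finset Z := htfin.toFinset with hT
  have hmemT : ∀ i, i ∈ T ↔ i ∈ t := fun i => htfin.mem_toFinset
  have hTE : ∀ i ∈ T, i ∈ E := fun i hi => htE ((hmemT i).mp hi)
  have hTne : T.Nonempty := by
    obtain ⟨e, he⟩ := hEne
    obtain ⟨i, hi, -⟩ := Set.mem_iUnion₂.mp (hcov he)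
    exact ⟨i, (hmemT i).mpr hi⟩
  set rmin : ℝ := T.inf' hTne r with hrmin
  have hrminpos : 0 < rmin := by
    rw [hrmin, Finset.lt_inf'_iff]
    exact fun i hi => hrpos i (hTE i hi)
  have hrmin_le : ∀ i ∈ T, rmin ≤ r i := fun i hi => Finset.inf'_le r hi
  set cmin : ℝ := T.inf' hTne c with hcmin
  have hcmin1 : 1 < cmin := by
    rw [hcmin, Finset.lt_inf'_iff]
    exact fun i hi => hc i (hTE i hi)
  have hcmin_le : ∀ i ∈ T, cmin ≤ c i := fun i hi => Finset.inf'_le c hi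
  -- uniform continuity moduli
  have huc : ∀ g : Γ, UniformContinuous fun a : Z => g • a := fun g =>
    CompactSpace.uniformContinuous_of_continuous (hcont g)
  have h1 : ∀ i ∈ T, ∃ δ > 0, ∀ a b : Z, dist a b < δ →
      dist ((γ i)⁻¹ • a) ((γ i)⁻¹ • b) < rmin / 4 := by
    intro i _
    obtain ⟨δ, hδ, h⟩ := Metric.uniformContinuous_iff.mp (huc (γ i)⁻¹) (rmin / 4)
      (by linarith)
    exact ⟨δ, hδ, fun a b hab => h hab⟩
  choose! δ1 hδ1pos hδ1 using h1
  set η : ℝ := T.inf' hTne δ1 with hη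
  have hηpos : 0 < η := by
    rw [hη, Finset.lt_inf'_iff]; exact hδ1pos
  have hη_le : ∀ i ∈ T, η ≤ δ1 i := fun i hi => Finset.inf'_le δ1 hi
  have h2 : ∀ i ∈ T, ∃ δ > 0, ∀ a b : Z, dist a b < δ →
      dist (γ i • a) (γ i • b) < η / 2 := by
    intro i _
    obtain ⟨δ, hδ, h⟩ := Metric.uniformContinuous_iff.mp (huc (γ i)) (η / 2)
      (by linarith)
    exact ⟨δ, hδ, fun a b hab => h hab⟩
  choose! δ2 hδ2pos hδ2 using h2
  set ε0 : ℝ := T.inf' hTne δ2 with hε0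
  have hε0pos : 0 < ε0 := by
    rw [hε0, Finset.lt_inf'_iff]; exact hδ2pos
  have hε0_le : ∀ i ∈ T, ε0 ≤ δ2 i := fun i hi => Finset.inf'_le δ2 hi
  set ε : ℝ := min ε0 (rmin / 4) with hεdef
  have hεpos : 0 < ε := lt_min hε0pos (by linarith)
  have hε_le_r : ε ≤ rmin / 4 := min_le_right _ _
  have hε_le_0 : ε ≤ ε0 := min_le_left _ _
  -- key step
  have key : ∀ z : Z, infDist z E < ε →
      ∃ g : Γ, cmin * infDist z E ≤ infDist (g • z) E := by
    intro z hz
    obtain ⟨e, heE, hze⟩ := hE.exists_infDist_eq_dist hEne z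
    have hzeε : dist z e < ε := hze ▸ hz
    obtain ⟨i, hit, hei⟩ := Set.mem_iUnion₂.mp (hcov heE)
    have hiT : i ∈ T := (hmemT i).mpr hit
    have hiE : i ∈ E := htE hit
    have hei4 : dist e i < r i / 4 := mem_ball.mp hei
    set g : Γ := γ i with hg
    have hgze : dist (g • z) (g • e) < η / 2 :=
      hδ2 i hiT z e (lt_of_lt_of_le hzeε (hε_le_0.trans (hε0_le i hiT)))
    obtain ⟨e', he'E, hge'⟩ := hE.exists_infDist_eq_dist hEne (g • z)
    have hgeE : g • e ∈ E := hinv g e heE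
    have hle1 : dist (g • z) e' ≤ dist (g • z) (g • e) :=
      hge' ▸ infDist_le_dist_of_mem hgeE
    have hle2 : dist e' (g • e) < η := by
      calc dist e' (g • e) ≤ dist e' (g • z) + dist (g • z) (g • e) := dist_triangle _ _ _
        _ = dist (g • z) e' + dist (g • z) (g • e) := by rw [dist_comm]
        _ < η / 2 + η / 2 := by linarith
        _ = η := by ring
    have hle3 : dist (g⁻¹ • e') e < rmin / 4 := by
      have := hδ1 i hiT e' (g • e) (lt_of_lt_of_le hle2 (hη_le i hiT))
      rwa [← hg, inv_smul_smul] at this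
    -- memberships in U i
    have hzU : z ∈ U i := by
      apply hrU i hiE
      rw [mem_ball]
      have : rmin ≤ r i := hrmin_le i hiT
      calc dist z i ≤ dist z e + dist e i := dist_triangle _ _ _
        _ < ε + r i / 4 := by linarith
        _ ≤ rmin / 4 + r i / 4 := by linarith
        _ ≤ r i / 4 + r i / 4 := by linarith
        _ < r i := by have := hrpos i hiE; linarith
    have he'U : g⁻¹ • e' ∈ U i := by
      apply hrU i hiE
      rw [mem_ball]
      have : rmin ≤ r i := hrmin_le i hiT
      calc dist (g⁻¹ • e') i ≤ dist (g⁻¹ • e') e + dist e i := dist_triangle _ _ _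
        _ < rmin / 4 + r i / 4 := by linarith
        _ ≤ r i / 4 + r i / 4 := by linarith
        _ < r i := by have := hrpos i hiE; linarith
    have hexpand : c i * dist z (g⁻¹ • e') ≤ dist (g • z) e' := by
      have := hexpa i hiE z hzU (g⁻¹ • e') he'U
      rwa [← hg, smul_inv_smul] at this
    have he''E : g⁻¹ • e' ∈ E := hinv g⁻¹ e' he'E
    have hinf_le : infDist z E ≤ dist z (g⁻¹ • e') := infDist_le_dist_of_mem he''E
    refine ⟨g, ?_⟩
    have hci0 : (0:ℝ) < c i := lt_trans one_pos (hc i hiE)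
    have hinf0 : 0 ≤ infDist z E := infDist_nonneg
    calc cmin * infDist z E ≤ c i * infDist z E := by
          apply mul_le_mul_of_nonneg_right (hcmin_le i hiT) hinf0
      _ ≤ c i * dist z (g⁻¹ • e') := by
          apply mul_le_mul_of_nonneg_left hinf_le (le_of_lt hci0)
      _ ≤ dist (g • z) e' := hexpand
      _ = infDist (g • z) E := hge'.symm
  -- iteration
  have iter : ∀ n : ℕ, ∀ z : Z, ε ≤ cmin ^ n * infDist z E →
      ∃ g : Γ, ε ≤ infDist (g • z) E := by
    intro n
    induction n with
    | zero => intro z h; rw [pow_zero, one_mul] at h; exact ⟨1, by rwa [one_smul]⟩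
    | succ n ih =>
      intro z h
      by_cases hlt : ε ≤ infDist z E
      · exact ⟨1, by rwa [one_smul]⟩
      push_neg at hlt
      obtain ⟨g, hg⟩ := key z hlt
      have hcn : (0:ℝ) ≤ cmin ^ n := pow_nonneg (by linarith) n
      have h' : ε ≤ cmin ^ n * infDist (g • z) E := by
        calc ε ≤ cmin ^ (n + 1) * infDist z E := h
          _ = cmin ^ n * (cmin * infDist z E) := by ring
          _ ≤ cmin ^ n * infDist (g • z) E := mul_le_mul_of_nonneg_left hg hcn
      obtain ⟨g', hg'⟩ := ih (g • z) h'
      exact ⟨g' * g, by rwa [mul_smul]⟩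
  -- conclude
  refine ⟨{w | ε ≤ infDist w E}, ?_, ?_, ?_⟩
  · intro w hw hwE
    have : infDist w E = 0 := infDist_zero_of_mem hwE
    rw [Set.mem_setOf_eq, this] at hw
    linarith
  · exact (isClosed_le continuous_const (continuous_infDist_pt E)).isCompact
  · intro z hz
    have hzpos : 0 < infDist z E :=
      (hE.isClosed.notMem_iff_infDist_pos hEne).mp hz
    obtain ⟨n, hn⟩ := pow_unbounded_of_one_lt (ε / infDist z E) hcmin1
    have : ε ≤ cmin ^ n * infDist z E := by
      rw [div_lt_iff₀ hzpos] at hn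
      linarith
    obtain ⟨g, hg⟩ := iter n z this
    exact ⟨g, hg⟩
end

section
/- Let γ be a homeomorphism of a compact metric space Z, let z ∈ Z, and suppose there exist r > 0 and c > 1 such that d(γz₁, γz₂) ≥ c·d(z₁, z₂) for all z₁, z₂ ∈ B(z, r). Then there exists r₀ ∈ (0, r] such that γ(B(z, r′)) ⊇ B(γz, c·r′) for all r′ ≤ r₀. -/
/-!
Since `γ` is open, `γ '' ball z r` contains `ball (γ z) δ` for some `δ > 0`. Once `c * r' ≤ δ`,
every `w ∈ ball (γ z) (c * r')` is `γ x` with `x ∈ ball z r`, and expansion at `z` gives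
`c * dist x z ≤ dist w (γ z) < c * r'`, so `x ∈ ball z r'`.
-/

open Metric

theorem ball_subset_image_ball_of_expanding {X Y : Type*} [PseudoMetricSpace X]
    [PseudoMetricSpace Y] (f : X → Y) {z : X} {r c r' : ℝ} (hc : 0 < c)
    (hexp : ∀ x ∈ ball z r, c * dist x z ≤ dist (f x) (f z))
    (hcover : ball (f z) (c * r') ⊆ f '' ball z r) :
    ball (f z) (c * r') ⊆ f '' ball z r' := by
  intro w hw
  obtain ⟨x, hx, rfl⟩ := hcover hw
  have hxz : c * dist x z < c * r' := (hexp x hx).trans_lt (mem_ball.mp hw)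
  exact ⟨x, mem_ball.mpr (lt_of_mul_lt_mul_left hxz hc.le), rfl⟩

theorem stmt_8_general {Z : Type*} [MetricSpace Z]
    (γ : Z ≃ₜ Z) (z : Z) (r c : ℝ) (hr : 0 < r) (hc : 1 < c)
    (hexp : ∀ z₁ ∈ ball z r, ∀ z₂ ∈ ball z r,
      c * dist z₁ z₂ ≤ dist (γ z₁) (γ z₂)) :
    ∃ r₀ ∈ Set.Ioc 0 r, ∀ r' ≤ r₀, ball (γ z) (c * r') ⊆ ⇑γ '' ball z r' := by
  have hc₀ : 0 < c := one_pos.trans hc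
  obtain ⟨δ, hδ, hδball⟩ := isOpen_iff.mp (γ.isOpenMap _ isOpen_ball) (γ z)
    (Set.mem_image_of_mem γ (mem_ball_self hr))
  refine ⟨min r (δ / c), ⟨lt_min hr (div_pos hδ hc₀), min_le_left _ _⟩, fun r' hr' => ?_⟩
  have hcr' : c * r' ≤ δ := (le_div_iff₀' hc₀).mp (hr'.trans (min_le_right _ _))
  exact ball_subset_image_ball_of_expanding γ hc₀ (fun x hx => hexp x hx z (mem_ball_self hr))
    ((ball_subset_ball hcr').trans hδball)

/-- A local uniform expansion maps small balls onto expanded balls. -/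
theorem stmt_8 {Z : Type*} [MetricSpace Z] [CompactSpace Z]
    (γ : Z ≃ₜ Z) (z : Z) (r c : ℝ) (hr : 0 < r) (hc : 1 < c)
    (hexp : ∀ z₁ ∈ ball z r, ∀ z₂ ∈ ball z r,
      c * dist z₁ z₂ ≤ dist (γ z₁) (γ z₂)) :
    ∃ r₀ ∈ Set.Ioc 0 r, ∀ r' ≤ r₀, ball (γ z) (c * r') ⊆ ⇑γ '' ball z r' :=
  stmt_8_general γ z r c hr hc hexp
end

section
/- Let Γ act on a perfect compact metric space Z as a convergence group (for every sequence γ_n → ∞ in Γ there are points z₊, z₋ ∈ Z and a subsequence along which γ_n converges to the constant map z₊ uniformly on compact subsets of Z − {z₋}). If the action is expanding at every point of Z (for each z ∈ Z there exist γ ∈ Γ, a neighborhood U of z, and c > 1 with d(γz₁, γz₂) ≥ c·d(z₁,z₂) for z₁,z₂ ∈ U), then every point z ∈ Z is intrinsically conical: there exists a sequence γ_n → ∞ in Γ such that γ_n⁻¹·z converges and the maps γ_n⁻¹ restricted to Z − {z} converge uniformly on compacta to a constant map whose value differs from lim γ_n⁻¹·z. -/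
open Filter Topology

private lemma escape_of_injective' {Γ : Type*} {u : ℕ → Γ} (hu : Function.Injective u)
    (F : Finset Γ) : ∀ᶠ n in atTop, u n ∉ F := by
  have hfin : (u ⁻¹' (F : Set Γ)).Finite := Set.Finite.preimage hu.injOn F.finite_toSet
  obtain ⟨N, hN⟩ := hfin.bddAbove
  rw [Filter.eventually_atTop]
  refine ⟨N + 1, fun n hn hmem => ?_⟩
  have : n ≤ N := hN (by simpa using hmem)
  omega

private lemma tluo_subseq' {Z : Type*} [UniformSpace Z] {F : ℕ → Z → Z} {f : Z → Z} {s : Set Z}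
    (hF : TendstoLocallyUniformlyOn F f atTop s) {ψ : ℕ → ℕ} (hψ : Tendsto ψ atTop atTop) :
    TendstoLocallyUniformlyOn (fun n => F (ψ n)) f atTop s := by
  intro u hu x hx
  obtain ⟨t, ht, hev⟩ := hF u hu x hx
  exact ⟨t, ht, hψ.eventually hev⟩

/-- An expanding convergence action on a perfect compact metric space has the
property that every point is intrinsically conical. -/
theorem stmt_9 {Γ Z : Type*} [Group Γ] [MetricSpace Z] [CompactSpace Z] [MulAction Γ Z]
    (hcont : ∀ γ : Γ, Continuous fun z : Z => γ • z)
    (hperf : ∀ z : Z, (𝓝[≠] z).NeBot)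
    (hconv : ∀ γn : ℕ → Γ, (∀ F : Finset Γ, ∀ᶠ n in atTop, γn n ∉ F) →
      ∃ (φ : ℕ → ℕ) (zp zm : Z), StrictMono φ ∧
        TendstoLocallyUniformlyOn (fun n z => γn (φ n) • z) (fun _ => zp) atTop {zm}ᶜ)
    (hexp : ∀ z : Z, ∃ (γ : Γ) (U : Set Z) (c : ℝ), 1 < c ∧ U ∈ 𝓝 z ∧
      ∀ z₁ ∈ U, ∀ z₂ ∈ U, c * dist z₁ z₂ ≤ dist (γ • z₁) (γ • z₂)) :
    ∀ z : Z, ∃ γn : ℕ → Γ, (∀ F : Finset Γ, ∀ᶠ n in atTop, γn n ∉ F) ∧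
      ∃ zl w : Z, w ≠ zl ∧
        Tendsto (fun n => (γn n)⁻¹ • z) atTop (𝓝 zl) ∧
        TendstoLocallyUniformlyOn (fun n x => (γn n)⁻¹ • x) (fun _ => w) atTop {z}ᶜ := by
  intro z
  haveI := hperf z
  -- choice data from the expansion hypothesis
  choose γfn Ufn cfn h1c hUc hexpc using hexp
  -- finite subcover of the interiors
  have hcov : (Set.univ : Set Z) ⊆ ⋃ x : Z, interior (Ufn x) := fun p _ =>
    Set.mem_iUnion.2 ⟨p, mem_interior_iff_mem_nhds.2 (hUc p)⟩
  obtain ⟨t, ht⟩ := isCompact_univ.elim_finite_subcover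
    (fun x : Z => interior (Ufn x)) (fun _ => isOpen_interior) hcov
  have htne : t.Nonempty := by
    have hz := ht (Set.mem_univ z)
    rw [Set.mem_iUnion₂] at hz
    obtain ⟨x, hx, -⟩ := hz
    exact ⟨x, hx⟩
  -- Lebesgue number
  have hcov2 : (Set.univ : Set Z) ⊆ ⋃ i : {x : Z // x ∈ t}, interior (Ufn i.1) := by
    intro p hp
    have := ht hp
    rw [Set.mem_iUnion₂] at this
    obtain ⟨x, hx, hmem⟩ := this
    exact Set.mem_iUnion.2 ⟨⟨x, hx⟩, hmem⟩
  obtain ⟨δ0, hδ0pos, hleb⟩ := lebesgue_number_lemma_of_metric isCompact_univ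
    (fun _ : {x : Z // x ∈ t} => isOpen_interior) hcov2
  -- uniform expansion factor
  set lam : ℝ := t.inf' htne cfn with hlamdef
  have hlam : 1 < lam := (Finset.lt_inf'_iff htne).2 fun x _ => h1c x
  have hlam0 : 0 < lam := lt_trans one_pos hlam
  -- lower modulus for each group element: points δ0-apart have images ≥ E γ' apart
  have hkey : ∀ γ' : Γ, ∃ e > 0, ∀ a b : Z, δ0 ≤ dist a b → e ≤ dist (γ' • a) (γ' • b) := by
    intro γ'
    have huc := CompactSpace.uniformContinuous_of_continuous (hcont γ'⁻¹)
    rw [Metric.uniformContinuous_iff] at huc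
    obtain ⟨e, he, hee⟩ := huc δ0 hδ0pos
    refine ⟨e, he, fun a b hab => ?_⟩
    by_contra hlt
    push_neg at hlt
    have h2 := hee hlt
    simp only [inv_smul_smul] at h2
    linarith
  choose Efn hEpos hEprop using hkey
  set eta : ℝ := t.inf' htne (fun x => Efn (γfn x)) with hetadef
  have heta : 0 < eta := (Finset.lt_inf'_iff htne).2 fun x _ => hEpos _
  set eps : ℝ := min δ0 eta with hepsdef
  have heps_pos : 0 < eps := lt_min hδ0pos heta
  have hepsδ : eps ≤ δ0 := min_le_left _ _
  have hepseta : eps ≤ eta := min_le_right _ _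
  -- choose an expanding letter at each point
  have hstep : ∀ p : Z, ∃ g : Γ,
      (∀ a : Z, dist a p < δ0 → lam * dist a p ≤ dist (g • a) (g • p)) ∧
      (∀ a : Z, δ0 ≤ dist a p → eta ≤ dist (g • a) (g • p)) := by
    intro p
    obtain ⟨i, hi⟩ := hleb p (Set.mem_univ p)
    refine ⟨γfn i.1, fun a ha => ?_, fun a ha => ?_⟩
    · have hpU : p ∈ Ufn i.1 := interior_subset (hi (Metric.mem_ball_self hδ0pos))
      have haU : a ∈ Ufn i.1 := interior_subset (hi (by simpa [Metric.mem_ball] using ha))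
      have h1 := hexpc i.1 a haU p hpU
      have hlc : lam ≤ cfn i.1 := Finset.inf'_le _ i.2
      nlinarith [dist_nonneg (x := a) (y := p)]
    · have h1 := hEprop (γfn i.1) a p ha
      have h2 : eta ≤ Efn (γfn i.1) := Finset.inf'_le (fun x => Efn (γfn x)) i.2
      linarith
  choose letter hlet1 hlet2 using hstep
  -- the expanding composition along the orbit of z
  let h : ℕ → Γ := fun n => n.rec (1 : Γ) (fun _ g => letter (g • z) * g)
  have hh0 : h 0 = 1 := rfl
  have hhs : ∀ n, h (n + 1) = letter (h n • z) * h n := fun _ => rfl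
  -- one step estimates
  have hone1 : ∀ (n : ℕ) (y : Z), dist (h n • y) (h n • z) < δ0 →
      lam * dist (h n • y) (h n • z) ≤ dist (h (n + 1) • y) (h (n + 1) • z) := by
    intro n y hd
    have e1 : h (n + 1) • y = letter (h n • z) • (h n • y) := by rw [hhs, mul_smul]
    have e2 : h (n + 1) • z = letter (h n • z) • (h n • z) := by rw [hhs, mul_smul]
    rw [e1, e2]
    exact hlet1 _ _ hd
  have hone2 : ∀ (n : ℕ) (y : Z), δ0 ≤ dist (h n • y) (h n • z) →
      eta ≤ dist (h (n + 1) • y) (h (n + 1) • z) := by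
    intro n y hd
    have e1 : h (n + 1) • y = letter (h n • z) • (h n • y) := by rw [hhs, mul_smul]
    have e2 : h (n + 1) • z = letter (h n • z) • (h n • z) := by rw [hhs, mul_smul]
    rw [e1, e2]
    exact hlet2 _ _ hd
  -- growth lemma
  have hgrow : ∀ (y : Z) (n k : ℕ),
      (∀ j, n ≤ j → j < n + k → dist (h j • y) (h j • z) < δ0) →
      lam ^ k * dist (h n • y) (h n • z) ≤ dist (h (n + k) • y) (h (n + k) • z) := by
    intro y n k
    induction k with
    | zero => simp
    | succ k ih =>
      intro hj
      have h1 := ih fun j hj1 hj2 => hj j hj1 (by omega)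
      have h2 := hone1 (n + k) y (hj (n + k) (by omega) (by omega))
      have hd0 : 0 ≤ dist (h n • y) (h n • z) := dist_nonneg
      calc lam ^ (k + 1) * dist (h n • y) (h n • z)
          = lam * (lam ^ k * dist (h n • y) (h n • z)) := by ring
        _ ≤ lam * dist (h (n + k) • y) (h (n + k) • z) :=
            mul_le_mul_of_nonneg_left h1 (le_of_lt hlam0)
        _ ≤ dist (h (n + k + 1) • y) (h (n + k + 1) • z) := h2
  -- exit lemma: every y ≠ z eventually separates to scale δ0
  have hexit : ∀ y : Z, y ≠ z → ∃ k, δ0 ≤ dist (h k • y) (h k • z) := by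
    intro y hy
    by_contra hcon
    push_neg at hcon
    have hd0 : 0 < dist y z := dist_pos.2 hy
    have hbd : Bornology.IsBounded (Set.univ : Set Z) := isCompact_univ.isBounded
    have hgr : ∀ k, lam ^ k * dist y z ≤ Metric.diam (Set.univ : Set Z) := by
      intro k
      have h1 := hgrow y 0 k fun j _ _ => hcon j
      simp only [hh0, one_smul, Nat.zero_add] at h1
      exact le_trans h1 (Metric.dist_le_diam_of_mem hbd (Set.mem_univ _) (Set.mem_univ _))
    have htend : Tendsto (fun k => lam ^ k * dist y z) atTop atTop :=
      (tendsto_pow_atTop_atTop_of_one_lt hlam).atTop_mul_const hd0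
    obtain ⟨k, hk⟩ := (htend.eventually_gt_atTop (Metric.diam (Set.univ : Set Z))).exists
    exact absurd (hgr k) (not_le.2 hk)
  -- persistence
  have hpers : ∀ (y : Z) (k : ℕ), eps ≤ dist (h k • y) (h k • z) →
      eps ≤ dist (h (k + 1) • y) (h (k + 1) • z) := by
    intro y k hk
    rcases lt_or_ge (dist (h k • y) (h k • z)) δ0 with hlt | hge
    · have h1 := hone1 k y hlt
      nlinarith [dist_nonneg (x := h k • y) (y := h k • z)]
    · have h1 := hone2 k y hge
      linarith
  have hsep : ∀ y : Z, y ≠ z → ∀ᶠ k in atTop, eps ≤ dist (h k • y) (h k • z) := by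
    intro y hy
    obtain ⟨k0, hk0⟩ := hexit y hy
    rw [eventually_atTop]
    refine ⟨k0, fun m hm => ?_⟩
    induction m, hm using Nat.le_induction with
    | base => exact le_trans hepsδ hk0
    | succ m _ ih => exact hpers y m ih
  -- injectivity of h
  have hinj : Function.Injective h := by
    have key : ∀ a b : ℕ, a < b → h a ≠ h b := by
      intro a b hab heq
      have hballs : ∀ᶠ y in 𝓝 z, ∀ k ∈ Finset.range (b + 1),
          dist (h k • y) (h k • z) < δ0 := by
        rw [Filter.eventually_all_finset]
        intro k _
        exact Metric.tendsto_nhds.mp ((hcont (h k)).tendsto z) δ0 hδ0pos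
      have hb2 : {y | ∀ k ∈ Finset.range (b + 1), dist (h k • y) (h k • z) < δ0} ∈
          𝓝[≠] z := nhdsWithin_le_nhds hballs
      obtain ⟨y, hyt, hyz⟩ := Filter.nonempty_of_mem (Filter.inter_mem hb2 self_mem_nhdsWithin)
      have hyz' : y ≠ z := hyz
      have hpos : 0 < dist (h a • y) (h a • z) :=
        dist_pos.2 fun e => hyz' (MulAction.injective (h a) e)
      have hgr := hgrow y a (b - a) fun j hj1 hj2 => hyt j (Finset.mem_range.2 (by omega))
      rw [show a + (b - a) = b by omega] at hgr
      rw [← heq] at hgr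
      have hp : 1 < lam ^ (b - a) := one_lt_pow₀ hlam (by omega)
      nlinarith
    intro n m hnm
    by_contra hne
    rcases Nat.lt_or_ge n m with h1 | h1
    · exact key n m h1 hnm
    · have h2 : m < n := by omega
      exact key m n h2 hnm.symm
  -- apply the convergence hypothesis
  obtain ⟨φ, zp, zm, hφ, hTLUO⟩ := hconv h fun F => escape_of_injective' hinj F
  -- the repelling point is z
  have hzm : zm = z := by
    by_contra hne
    have hzmem : z ∈ ({zm}ᶜ : Set Z) := by simp [Ne.symm hne]
    rw [Metric.tendstoLocallyUniformlyOn_iff] at hTLUO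
    obtain ⟨t', ht', hev⟩ := hTLUO (eps / 3) (by linarith) z hzmem
    have htz : t' ∈ 𝓝 z := by
      have hopen : ({zm}ᶜ : Set Z) ∈ 𝓝 z := (isOpen_compl_singleton).mem_nhds hzmem
      rwa [nhdsWithin_eq_nhds.2 hopen] at ht'
    have hb2 : t' ∈ 𝓝[≠] z := nhdsWithin_le_nhds htz
    obtain ⟨y, hyt, hyz⟩ := Filter.nonempty_of_mem (Filter.inter_mem hb2 self_mem_nhdsWithin)
    have hyz' : y ≠ z := hyz
    have hsepφ : ∀ᶠ n in atTop, eps ≤ dist (h (φ n) • y) (h (φ n) • z) :=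
      hφ.tendsto_atTop.eventually (hsep y hyz')
    obtain ⟨n, h1, h2⟩ := (hev.and hsepφ).exists
    have hy' := h1 y hyt
    have hz' := h1 z (mem_of_mem_nhds htz)
    have htri := dist_triangle (h (φ n) • y) zp (h (φ n) • z)
    rw [dist_comm (h (φ n) • y) zp] at htri
    linarith
  rw [hzm] at hTLUO
  -- a fixed auxiliary point x0 ≠ z
  obtain ⟨x0, hx0⟩ := Filter.nonempty_of_mem (f := 𝓝[≠] z) self_mem_nhdsWithin
  have hx0' : x0 ≠ z := hx0
  have hx0lim : Tendsto (fun n => h (φ n) • x0) atTop (𝓝 zp) := hTLUO.tendsto_at hx0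
  have hx0sep : ∀ᶠ n in atTop, eps ≤ dist (h (φ n) • x0) (h (φ n) • z) :=
    hφ.tendsto_atTop.eventually (hsep x0 hx0')
  have hx0close : ∀ᶠ n in atTop, dist (h (φ n) • x0) zp < eps / 2 :=
    Metric.tendsto_nhds.mp hx0lim _ (by linarith)
  have hfar : ∀ᶠ n in atTop, eps / 2 ≤ dist (h (φ n) • z) zp := by
    filter_upwards [hx0sep, hx0close] with n h1 h2
    have htri := dist_triangle (h (φ n) • x0) zp (h (φ n) • z)
    rw [dist_comm zp (h (φ n) • z)] at htri
    linarith
  -- convergent subsequence for the orbit of z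
  obtain ⟨zl, -, ψ, hψ, hzl⟩ := isCompact_univ.tendsto_subseq
    (x := fun n => h (φ n) • z) fun n => Set.mem_univ _
  have hzlfar : eps / 2 ≤ dist zl zp := by
    refine ge_of_tendsto (hzl.dist tendsto_const_nhds) ?_
    exact hψ.tendsto_atTop.eventually hfar
  refine ⟨fun n => (h (φ (ψ n)))⁻¹, ?_, zl, zp, ?_, ?_, ?_⟩
  · intro F
    have hinj2 : Function.Injective fun n => (h (φ (ψ n)))⁻¹ := fun a b e =>
      hψ.injective (hφ.injective (hinj (inv_injective e)))
    exact escape_of_injective' hinj2 F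
  · intro e
    rw [e] at hzlfar
    simp only [dist_self] at hzlfar
    linarith
  · simp only [inv_inv]
    exact hzl
  · simp only [inv_inv]
    exact tluo_subseq' hTLUO hψ.tendsto_atTop
end

section
/- Let F₂ be the free group on two generators a, b, and let φ : F₂ → ℤ be the homomorphism with φ(a) = φ(b) = 1. Let Γ = {(h₁, h₂) ∈ F₂ × F₂ : φ(h₁) = φ(h₂)}. Then Γ is a finitely generated subgroup of F₂ × F₂, and Γ is undistorted: with respect to some (any) finite generating set of Γ and the standard generating set of F₂ × F₂, the inclusion Γ → F₂ × F₂ is a quasi-isometric embedding, i.e., there is a constant C ≥ 1 such that the word length of γ ∈ Γ in Γ is at most C times its word length in F₂ × F₂ plus C. -/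
/-- The standard generating set of `F₂ × F₂`. -/
def stdGens : Set (FreeGroup Bool × FreeGroup Bool) :=
  {(FreeGroup.of true, 1), (FreeGroup.of false, 1),
   (1, FreeGroup.of true), (1, FreeGroup.of false)}

/-- `g` has word length at most `n` with respect to the generating set `S`. -/
def InWordBall {G : Type*} [Group G] (S : Set G) (n : ℕ) (g : G) : Prop :=
  ∃ l : List G, l.length ≤ n ∧ (∀ x ∈ l, x ∈ S ∨ x⁻¹ ∈ S) ∧ l.prod = g

/-- The homomorphism `F₂ → ℤ` sending both generators to `1`. -/
def phi2 : FreeGroup Bool →* Multiplicative ℤ :=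
  FreeGroup.lift fun _ => Multiplicative.ofAdd 1

/-- The Stallings–Bieri fiber product `Γ = {(h₁,h₂) : φ(h₁) = φ(h₂)}`. -/
def SB : Subgroup (FreeGroup Bool × FreeGroup Bool) :=
  ((phi2.comp (MonoidHom.fst _ _)) / (phi2.comp (MonoidHom.snd _ _))).ker

/-!
Write `a = of true`, `b = of false`. An element `γ = (u, v)` of `Γ`, with `k = φ u = φ v`, factors as
`(u, a^k) · (a, a)^(-k) · (a^k, v)`. Each factor is the image of `γ` under a homomorphism
`F₂ × F₂ → Γ` sending every standard generator to `1` or to one of `(a, a)`, `(b, a)`, `(a, b)`,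
so each factor has length in `Γ` at most the length of `γ` in `F₂ × F₂`.
-/

namespace InWordBall

variable {G H : Type*} [Group G] [Group H] {S : Set G} {T : Set H} {m n : ℕ} {g h : G}

theorem mono (hmn : m ≤ n) (hg : InWordBall S m g) : InWordBall S n g :=
  let ⟨l, hl, hS, hprod⟩ := hg
  ⟨l, hl.trans hmn, hS, hprod⟩

theorem one (n : ℕ) : InWordBall S n 1 :=
  ⟨[], n.zero_le, by simp, rfl⟩

theorem of_mem (hg : g ∈ S) : InWordBall S 1 g :=
  ⟨[g], le_rfl, by simp [hg], by simp⟩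

theorem mul (hg : InWordBall S m g) (hh : InWordBall S n h) : InWordBall S (m + n) (g * h) := by
  obtain ⟨l, hl, hS, rfl⟩ := hg
  obtain ⟨l', hl', hS', rfl⟩ := hh
  refine ⟨l ++ l', by simp only [List.length_append]; omega, ?_, List.prod_append⟩
  simp only [List.mem_append]
  rintro x (hx | hx)
  exacts [hS x hx, hS' x hx]

theorem inv (hg : InWordBall S n g) : InWordBall S n g⁻¹ := by
  obtain ⟨l, hl, hS, rfl⟩ := hg
  refine ⟨(l.map (·⁻¹)).reverse, by simpa using hl, ?_, (List.prod_inv_reverse l).symm⟩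
  simp only [List.mem_reverse, List.mem_map]
  rintro _ ⟨x, hx, rfl⟩
  rw [inv_inv]
  exact (hS x hx).symm

theorem map {c : ℕ} (f : G →* H) (hf : ∀ s ∈ S, InWordBall T c (f s))
    (hg : InWordBall S n g) : InWordBall T (c * n) (f g) := by
  obtain ⟨l, hl, hS, rfl⟩ := hg
  refine mono (Nat.mul_le_mul_left c hl) ?_
  clear hl
  induction l with
  | nil => simpa using one 0
  | cons x l ih =>
    have hx : InWordBall T c (f x) := by
      rcases hS x List.mem_cons_self with hx | hx
      · exact hf x hx
      · simpa using (hf _ hx).inv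
    rw [List.prod_cons, map_mul, List.length_cons, Nat.mul_succ, Nat.add_comm]
    exact hx.mul (ih fun y hy => hS y (List.mem_cons_of_mem x hy))

end InWordBall

open FreeGroup (of)

theorem FreeGroup.hom_mem_of_forall_of_mem {α H : Type*} [Group H] {K : Subgroup H}
    (f : FreeGroup α →* H) (hf : ∀ i, f (of i) ∈ K) (x : FreeGroup α) : f x ∈ K := by
  induction x using FreeGroup.induction_on with
  | C1 => simp
  | of i => exact hf i
  | inv_of i h => simpa using K.inv_mem h
  | mul x y hx hy => simpa using K.mul_mem hx hy

theorem phi2_of (i : Bool) : phi2 (of i) = Multiplicative.ofAdd 1 := by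
  simp [phi2]

theorem stdGens_fst_eq_one_or_of {s : FreeGroup Bool × FreeGroup Bool} (hs : s ∈ stdGens) :
    s.1 = 1 ∨ ∃ i, s.1 = of i := by
  simp only [stdGens, Set.mem_insert_iff, Set.mem_singleton_iff] at hs
  rcases hs with rfl | rfl | rfl | rfl <;> simp

theorem stdGens_snd_eq_one_or_of {s : FreeGroup Bool × FreeGroup Bool} (hs : s ∈ stdGens) :
    s.2 = 1 ∨ ∃ i, s.2 = of i := by
  simp only [stdGens, Set.mem_insert_iff, Set.mem_singleton_iff] at hs
  rcases hs with rfl | rfl | rfl | rfl <;> simp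

section

variable {H : Type*} [Group H] {T : Set H} {f : FreeGroup Bool →* H}

theorem inWordBall_one_apply_of_eq_one_or_of (hf : ∀ i, f (of i) ∈ T) {x : FreeGroup Bool}
    (hx : x = 1 ∨ ∃ i, x = of i) : InWordBall T 1 (f x) := by
  rcases hx with rfl | ⟨i, rfl⟩
  · simpa using InWordBall.one 1
  · exact InWordBall.of_mem (hf i)

theorem inWordBall_apply_fst_of_stdGens (hf : ∀ i, f (of i) ∈ T) {n : ℕ}
    {g : FreeGroup Bool × FreeGroup Bool} (hg : InWordBall stdGens n g) :
    InWordBall T n (f g.1) := by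
  simpa using hg.map (f.comp (MonoidHom.fst _ _)) fun s hs =>
    inWordBall_one_apply_of_eq_one_or_of hf (stdGens_fst_eq_one_or_of hs)

theorem inWordBall_apply_snd_of_stdGens (hf : ∀ i, f (of i) ∈ T) {n : ℕ}
    {g : FreeGroup Bool × FreeGroup Bool} (hg : InWordBall stdGens n g) :
    InWordBall T n (f g.2) := by
  simpa using hg.map (f.comp (MonoidHom.snd _ _)) fun s hs =>
    inWordBall_one_apply_of_eq_one_or_of hf (stdGens_snd_eq_one_or_of hs)

end

namespace SB

theorem mem_iff {g : FreeGroup Bool × FreeGroup Bool} : g ∈ SB ↔ phi2 g.1 = phi2 g.2 := by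
  simp [SB, MonoidHom.mem_ker, div_eq_one]

theorem mk_of_mem (i j : Bool) : ((of i, of j) : FreeGroup Bool × FreeGroup Bool) ∈ SB :=
  mem_iff.2 <| by simp only [phi2_of]

noncomputable def sectionFst : FreeGroup Bool →* SB :=
  FreeGroup.lift fun i => ⟨(of i, of true), mk_of_mem i true⟩

noncomputable def sectionSnd : FreeGroup Bool →* SB :=
  FreeGroup.lift fun i => ⟨(of true, of i), mk_of_mem true i⟩

theorem coe_sectionFst (u : FreeGroup Bool) :
    (sectionFst u : FreeGroup Bool × FreeGroup Bool) =
      (u, zpowersHom _ (of true) (phi2 u)) := by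
  have : SB.subtype.comp sectionFst =
      (MonoidHom.id _).prod ((zpowersHom _ (of true)).comp phi2) :=
    FreeGroup.ext_hom _ _ fun i => by simp [sectionFst, phi2_of]
  exact DFunLike.congr_fun this u

theorem coe_sectionSnd (v : FreeGroup Bool) :
    (sectionSnd v : FreeGroup Bool × FreeGroup Bool) =
      (zpowersHom _ (of true) (phi2 v), v) := by
  have : SB.subtype.comp sectionSnd =
      ((zpowersHom _ (of true)).comp phi2).prod (MonoidHom.id _) :=
    FreeGroup.ext_hom _ _ fun i => by simp [sectionSnd, phi2_of]
  exact DFunLike.congr_fun this v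

noncomputable def diagPow : FreeGroup Bool →* SB :=
  (zpowersHom SB (sectionFst (of true))).comp phi2

theorem coe_diagPow (u : FreeGroup Bool) :
    (diagPow u : FreeGroup Bool × FreeGroup Bool) =
      (zpowersHom _ (of true) (phi2 u), zpowersHom _ (of true) (phi2 u)) := by
  simp [diagPow, coe_sectionFst, phi2_of]

theorem sectionSnd_of_true : sectionSnd (of true) = sectionFst (of true) := rfl

theorem eq_sectionFst_mul_mul_sectionSnd (γ : SB) :
    γ = sectionFst γ.1.1 * (diagPow γ.1.1)⁻¹ * sectionSnd γ.1.2 := by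
  obtain ⟨⟨u, v⟩, hγ⟩ := γ
  have hφ : phi2 u = phi2 v := mem_iff.1 hγ
  apply Subtype.ext
  simp only [Subgroup.coe_mul, Subgroup.coe_inv, coe_diagPow, coe_sectionFst, coe_sectionSnd, ← hφ]
  ext <;> simp

noncomputable def gens : Finset SB :=
  {sectionFst (of true), sectionFst (of false), sectionSnd (of false)}

theorem sectionFst_of_mem_gens (i : Bool) : sectionFst (of i) ∈ gens := by
  cases i <;> simp [gens]

theorem sectionSnd_of_mem_gens (i : Bool) : sectionSnd (of i) ∈ gens := by
  cases i <;> simp [gens, sectionSnd_of_true]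

theorem diagPow_of_mem_gens (i : Bool) : diagPow (of i) ∈ gens := by
  simpa [diagPow, phi2_of] using sectionFst_of_mem_gens true

theorem closure_gens : Subgroup.closure (gens : Set SB) = ⊤ := by
  refine eq_top_iff.2 fun γ _ => ?_
  have hmem {f : FreeGroup Bool →* SB} (hf : ∀ i, f (of i) ∈ gens) (x : FreeGroup Bool) :
      f x ∈ Subgroup.closure (gens : Set SB) :=
    FreeGroup.hom_mem_of_forall_of_mem f (fun i => Subgroup.subset_closure (hf i)) x
  rw [eq_sectionFst_mul_mul_sectionSnd γ]
  exact mul_mem (mul_mem (hmem sectionFst_of_mem_gens _)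
    (inv_mem (hmem diagPow_of_mem_gens _))) (hmem sectionSnd_of_mem_gens _)

end SB

/-- `Γ` is finitely generated and undistorted in `F₂ × F₂`. -/
theorem stmt_17 :
    SB.FG ∧
    ∃ (S : Finset SB) (C : ℕ), 1 ≤ C ∧
      Subgroup.closure (S : Set SB) = ⊤ ∧
      ∀ (γ : SB) (n : ℕ),
        InWordBall stdGens n (γ : FreeGroup Bool × FreeGroup Bool) →
        InWordBall (S : Set SB) (C * n + C) γ := by
  refine ⟨(Group.fg_iff_subgroup_fg SB).1 (Group.fg_def.2 ⟨SB.gens, SB.closure_gens⟩),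
    SB.gens, 3, by norm_num, SB.closure_gens, fun γ n hγ => ?_⟩
  have h₁ := inWordBall_apply_fst_of_stdGens SB.sectionFst_of_mem_gens hγ
  have h₂ := inWordBall_apply_fst_of_stdGens SB.diagPow_of_mem_gens hγ
  have h₃ := inWordBall_apply_snd_of_stdGens SB.sectionSnd_of_mem_gens hγ
  rw [SB.eq_sectionFst_mul_mul_sectionSnd γ]
  exact ((h₁.mul h₂.inv).mul h₃).mono (by omega)
end

section
/- Let a group Γ act by homeomorphisms on a compact metric space Z, and suppose the action is expanding at every point of Z with uniform constants: there exist r > 0 and c > 1 such that for every z ∈ Z some γ ∈ Γ satisfies d(γz₁, γz₂) ≥ c·d(z₁, z₂) for all z₁, z₂ ∈ B(z, r) and γ(B(z, r′)) ⊇ B(γz, c·r′) for all r′ ≤ r. Then for every point z ∈ Z and every neighborhood V of z there exists γ ∈ Γ such that γ(V) ⊇ B(γ·z, r). -/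
open Filter Topology Metric

/-- Iterating uniformly expanding elements: every neighborhood of a point can be
blown up by some group element to contain a ball of the uniform radius `r`. -/
theorem stmt_18 {Γ Z : Type*} [Group Γ] [MetricSpace Z] [CompactSpace Z] [MulAction Γ Z]
    (hcont : ∀ γ : Γ, Continuous fun z : Z => γ • z)
    (r c : ℝ) (hr : 0 < r) (hc : 1 < c)
    (hexp : ∀ z : Z, ∃ γ : Γ,
      (∀ z₁ ∈ ball z r, ∀ z₂ ∈ ball z r, c * dist z₁ z₂ ≤ dist (γ • z₁) (γ • z₂)) ∧
      ∀ r' ≤ r, ball (γ • z) (c * r') ⊆ (fun w => γ • w) '' ball z r') :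
    ∀ (z : Z) (V : Set Z), V ∈ 𝓝 z → ∃ γ : Γ, ball (γ • z) r ⊆ (fun w => γ • w) '' V := by
  intro z V hV
  obtain ⟨s, hs0, hsV⟩ := Metric.mem_nhds_iff.mp hV
  set s' := min s r with hs'def
  have hs'0 : 0 < s' := lt_min hs0 hr
  have hc0 : (0:ℝ) < c := lt_trans zero_lt_one hc
  have key : ∀ n : ℕ, ∃ γ : Γ,
      ball (γ • z) (min r (c ^ n * s')) ⊆ (fun w => γ • w) '' V := by
    intro n
    induction n with
    | zero =>
      refine ⟨1, fun x hx => ?_⟩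
      refine ⟨x, hsV ?_, one_smul _ x⟩
      have hx' : dist x z < min r (c ^ 0 * s') := by simpa [one_smul] using hx
      have : dist x z < s := lt_of_lt_of_le hx' (by
        calc min r (c ^ 0 * s') ≤ c ^ 0 * s' := min_le_right _ _
          _ = s' := by ring
          _ ≤ s := min_le_left _ _)
      exact mem_ball.mpr this
    | succ n ih =>
      obtain ⟨γ, hγ⟩ := ih
      set t := min r (c ^ n * s') with htdef
      have ht0 : 0 < t := lt_min hr (by positivity)
      have htr : t ≤ r := min_le_left _ _
      obtain ⟨γ', _, h2⟩ := hexp (γ • z)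
      refine ⟨γ' * γ, ?_⟩
      have hsub : ball ((γ' * γ) • z) (c * t) ⊆ (fun w => (γ' * γ) • w) '' V := by
        intro x hx
        have hx' : x ∈ (fun w => γ' • w) '' ball (γ • z) t := by
          apply h2 t htr
          simpa [mul_smul] using hx
        obtain ⟨y, hy, rfl⟩ := hx'
        obtain ⟨v, hv, rfl⟩ := hγ hy
        exact ⟨v, hv, by simp [mul_smul]⟩
      refine subset_trans (ball_subset_ball ?_) hsub
      calc min r (c ^ (n + 1) * s') = min r (c * (c ^ n * s')) := by ring_nf
        _ ≤ min (c * r) (c * (c ^ n * s')) :=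
            min_le_min (le_mul_of_one_le_left hr.le hc.le) le_rfl
        _ = c * min r (c ^ n * s') := (mul_min_of_nonneg _ _ hc0.le).symm
        _ = c * t := rfl
  obtain ⟨n, hn⟩ := pow_unbounded_of_one_lt (r / s') hc
  have : r ≤ c ^ n * s' := by
    rw [div_lt_iff₀ hs'0] at hn
    linarith
  obtain ⟨γ, hγ⟩ := key n
  exact ⟨γ, by simpa [min_eq_left this] using hγ⟩
end
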